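/- arXiv:2605.10420 — 3 statements merged into one kernel-verified Lean document; each statement's English description precedes it below -/
import Mathlib

section
/- Suppose γ, δ, κ, μ, ϖ, ς are positive reals with δ + (γ−1)κ > 0 and δ > μ. Then there exists a pair (B,P) with B > 0, P > 0 satisfying B(1 − B − κP) − γB + δP = 0 and P(μ − ϖB − ςP) + γB − δP = 0. -/
set_option maxHeartbeats 2000000 in
theorem stmt3 (γ δ κ μ ϖ ς : ℝ)
    (hγ : 0 < γ) (hδ : 0 < δ) (hκ : 0 < κ) (hμ : 0 < μ) (hϖ : 0 < ϖ) (hς : 0 < ς)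
    (h1 : 0 < δ + (γ - 1) * κ) (h2 : μ < δ) :
    ∃ B P : ℝ, 0 < B ∧ 0 < P ∧
      B * (1 - B - κ * P) - γ * B + δ * P = 0 ∧
      P * (μ - ϖ * B - ς * P) + γ * B - δ * P = 0 := by
  obtain ⟨B0, hB0nonneg, hB0ge, hB0lt, hB0max, hB0aux⟩ :
      ∃ B0 : ℝ, 0 ≤ B0 ∧ 1 - γ ≤ B0 ∧ κ * B0 < δ ∧
        (∀ x : ℝ, 0 < x → 1 - γ < x → B0 < x) ∧
        (B0 = 0 ∨ B0 = 1 - γ) := by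
    refine ⟨max 0 (1 - γ), le_max_left _ _, le_max_right _ _, ?_, ?_, ?_⟩
    · rcases max_cases 0 (1 - γ) with ⟨h, _⟩ | ⟨h, _⟩ <;> rw [h] <;> nlinarith
    · intro x hx1 hx2
      exact max_lt hx1 hx2
    · rcases max_cases 0 (1 - γ) with ⟨h, _⟩ | ⟨h, _⟩
      · exact Or.inl h
      · exact Or.inr h
  obtain ⟨M, hMpos, hςM, hMbκ⟩ :
      ∃ M : ℝ, 0 < M ∧ μ + 1 ≤ ς * M ∧ γ * δ + κ ≤ κ * M := by
    refine ⟨(μ + 1) / ς + γ * δ / κ + 1, by positivity, ?_, ?_⟩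
    · have e4 : ς * ((μ + 1) / ς) = μ + 1 := mul_div_cancel₀ _ hς.ne'
      have e5 : 0 ≤ ς * (γ * δ / κ) := by positivity
      rw [mul_add, mul_add, e4]
      linarith
    · have e2 : κ * (γ * δ / κ) = γ * δ := mul_div_cancel₀ _ hκ.ne'
      have e3 : 0 ≤ κ * ((μ + 1) / ς) := by positivity
      rw [mul_add, mul_add, e2]
      linarith
  obtain ⟨b, hbpos, hDb, hbγ, hbquad⟩ :
      ∃ b : ℝ, 0 < b ∧ 0 < δ - κ * b ∧ 0 < b + γ - 1 ∧
        b * (b + γ - 1) = M * (δ - κ * b) := by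
    obtain ⟨s, hs0, hs2⟩ :
        ∃ s : ℝ, 0 ≤ s ∧ s ^ 2 = (γ - 1 + M * κ) ^ 2 + 4 * M * δ :=
      ⟨Real.sqrt ((γ - 1 + M * κ) ^ 2 + 4 * M * δ), Real.sqrt_nonneg _,
        Real.sq_sqrt (by positivity)⟩
    obtain ⟨b, hbdef⟩ : ∃ b : ℝ, b = (s - (γ - 1 + M * κ)) / 2 := ⟨_, rfl⟩
    have hquad : b * (b + γ - 1) = M * (δ - κ * b) := by
      rw [hbdef]; linear_combination hs2 / 4
    have hbpos : 0 < b := by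
      have hAs : γ - 1 + M * κ < s := by
        by_contra h
        push_neg at h
        have hA0 : 0 ≤ γ - 1 + M * κ := le_trans hs0 h
        nlinarith [mul_pos hMpos hδ]
      rw [hbdef]; linarith
    have hDb : 0 < δ - κ * b := by
      by_contra h
      push_neg at h
      have hb1γ : 1 - γ < b := by nlinarith
      nlinarith [mul_pos hbpos (show (0:ℝ) < b + γ - 1 by linarith),
        mul_nonneg hMpos.le (show (0:ℝ) ≤ κ * b - δ by linarith)]
    have hbγ : 0 < b + γ - 1 := by
      nlinarith [mul_pos hMpos hDb]
    exact ⟨b, hbpos, hDb, hbγ, hquad⟩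
  have hbB0 : B0 < b := hB0max b hbpos (by linarith)
  -- value of Pf at b
  have hPfb : b * (b + γ - 1) / (δ - κ * b) = M := by
    rw [div_eq_iff hDb.ne']
    linear_combination hbquad
  -- endpoint a near B0 where the auxiliary polynomial H is positive
  obtain ⟨a, hHa, hab, hB0a⟩ :
      ∃ a : ℝ, 0 < γ * (δ - κ * a) ^ 2 +
          (a + γ - 1) * ((μ - δ - ϖ * a) * (δ - κ * a) - ς * (a * (a + γ - 1))) ∧
        a < b ∧ B0 < a := by
    have hHcont : Continuous (fun B : ℝ => γ * (δ - κ * B) ^ 2 +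
        (B + γ - 1) * ((μ - δ - ϖ * B) * (δ - κ * B) - ς * (B * (B + γ - 1)))) := by
      fun_prop
    have hHB0 : 0 < γ * (δ - κ * B0) ^ 2 +
        (B0 + γ - 1) * ((μ - δ - ϖ * B0) * (δ - κ * B0) - ς * (B0 * (B0 + γ - 1))) := by
      rcases hB0aux with hB0eq | hB0eq
      · have hγge : 1 ≤ γ := by
          rcases le_or_gt 1 γ with h | h
          · exact h
          · exfalso; rw [hB0eq] at hB0ge; linarith
        have hX : 0 < γ * μ + δ - μ := by nlinarith [mul_pos hγ hμ]
        rw [hB0eq]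
        nlinarith [mul_pos hδ hX]
      · rw [hB0eq]
        have h1' : 0 < δ - κ * (1 - γ) := by nlinarith
        nlinarith [mul_pos hγ (mul_pos h1' h1')]
    have hev1 : {x : ℝ | 0 < γ * (δ - κ * x) ^ 2 +
        (x + γ - 1) * ((μ - δ - ϖ * x) * (δ - κ * x) - ς * (x * (x + γ - 1)))} ∈ nhds B0 :=
      (isOpen_lt continuous_const hHcont).mem_nhds hHB0
    have hev2 : Set.Iio b ∈ nhds B0 := Iio_mem_nhds hbB0
    have hev : ∀ᶠ x in nhdsWithin B0 (Set.Ioi B0),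
        (0 < γ * (δ - κ * x) ^ 2 +
          (x + γ - 1) * ((μ - δ - ϖ * x) * (δ - κ * x) - ς * (x * (x + γ - 1)))) ∧
        x < b ∧ B0 < x := by
      filter_upwards [mem_nhdsWithin_of_mem_nhds hev1, mem_nhdsWithin_of_mem_nhds hev2,
        self_mem_nhdsWithin] with x h1x h2x h3x
      exact ⟨h1x, h2x, h3x⟩
    exact hev.exists
  have hapos : 0 < a := lt_of_le_of_lt hB0nonneg hB0a
  have haγ : 0 < a + γ - 1 := by have := lt_of_le_of_lt hB0ge hB0a; linarith
  have hDa : 0 < δ - κ * a := by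
    have := mul_lt_mul_of_pos_left hab hκ
    linarith
  -- the second-equation function
  have hfa_pos : 0 < a * (a + γ - 1) / (δ - κ * a) *
      (μ - ϖ * a - ς * (a * (a + γ - 1) / (δ - κ * a))) + γ * a -
      δ * (a * (a + γ - 1) / (δ - κ * a)) := by
    obtain ⟨Pa, hPa⟩ : ∃ P : ℝ, P = a * (a + γ - 1) / (δ - κ * a) := ⟨_, rfl⟩
    rw [← hPa]
    have hPaD : Pa * (δ - κ * a) = a * (a + γ - 1) := by
      rw [hPa]; exact div_mul_cancel₀ _ hDa.ne'
    have key : (Pa * (μ - ϖ * a - ς * Pa) + γ * a - δ * Pa) * (δ - κ * a) ^ 2 =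
        a * (γ * (δ - κ * a) ^ 2 +
          (a + γ - 1) * ((μ - δ - ϖ * a) * (δ - κ * a) - ς * (a * (a + γ - 1)))) := by
      linear_combination ((μ - δ - ϖ * a) * (δ - κ * a) -
        ς * (Pa * (δ - κ * a) + a * (a + γ - 1))) * hPaD
    nlinarith [key, mul_pos hapos hHa, pow_pos hDa 2]
  have hfb_neg : b * (b + γ - 1) / (δ - κ * b) *
      (μ - ϖ * b - ς * (b * (b + γ - 1) / (δ - κ * b))) + γ * b -
      δ * (b * (b + γ - 1) / (δ - κ * b)) < 0 := by
    rw [hPfb]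
    nlinarith [mul_pos hκ hMpos, mul_pos hγ hDb,
      mul_nonneg (mul_nonneg hκ.le hϖ.le) (mul_nonneg hbpos.le hMpos.le),
      mul_nonneg (mul_nonneg hκ.le hδ.le) hMpos.le,
      mul_nonneg (sub_nonneg.mpr hςM) (mul_pos hκ hMpos).le]
  -- continuity on [a, b]
  have hne : ∀ x ∈ Set.Icc a b, δ - κ * x ≠ 0 := by
    intro x hx
    have h3 : κ * x ≤ κ * b := mul_le_mul_of_nonneg_left hx.2 hκ.le
    have : 0 < δ - κ * x := by linarith
    exact this.ne'
  have hPc : ContinuousOn (fun B : ℝ => B * (B + γ - 1) / (δ - κ * B)) (Set.Icc a b) :=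
    ContinuousOn.div (by fun_prop) (by fun_prop) hne
  have hfc : ContinuousOn (fun B : ℝ => B * (B + γ - 1) / (δ - κ * B) *
      (μ - ϖ * B - ς * (B * (B + γ - 1) / (δ - κ * B))) + γ * B -
      δ * (B * (B + γ - 1) / (δ - κ * B))) (Set.Icc a b) :=
    ((hPc.mul ((continuousOn_const.sub (continuousOn_const.mul continuousOn_id)).sub
      (continuousOn_const.mul hPc))).add
        (continuousOn_const.mul continuousOn_id)).sub (continuousOn_const.mul hPc)
  have h0mem : (0 : ℝ) ∈ Set.Icc
      (b * (b + γ - 1) / (δ - κ * b) *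
        (μ - ϖ * b - ς * (b * (b + γ - 1) / (δ - κ * b))) + γ * b -
        δ * (b * (b + γ - 1) / (δ - κ * b)))
      (a * (a + γ - 1) / (δ - κ * a) *
        (μ - ϖ * a - ς * (a * (a + γ - 1) / (δ - κ * a))) + γ * a -
        δ * (a * (a + γ - 1) / (δ - κ * a))) := ⟨hfb_neg.le, hfa_pos.le⟩
  obtain ⟨c, hcmem, hc0⟩ := intermediate_value_Icc' hab.le hfc h0mem
  have hcpos : 0 < c := lt_of_lt_of_le hapos hcmem.1
  have hDc : 0 < δ - κ * c := by
    have h3 : κ * c ≤ κ * b := mul_le_mul_of_nonneg_left hcmem.2 hκ.le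
    linarith
  have hcγ : 0 < c + γ - 1 := by
    have := hcmem.1
    linarith
  refine ⟨c, c * (c + γ - 1) / (δ - κ * c), hcpos,
    div_pos (mul_pos hcpos hcγ) hDc, ?_, ?_⟩
  · obtain ⟨Pc, hPcdef⟩ : ∃ P : ℝ, P = c * (c + γ - 1) / (δ - κ * c) := ⟨_, rfl⟩
    rw [← hPcdef]
    have hPcD : Pc * (δ - κ * c) = c * (c + γ - 1) := by
      rw [hPcdef]; exact div_mul_cancel₀ _ hDc.ne'
    linear_combination hPcD
  · exact hc0
end

section
/- With notation of the previous statement, if additionally a₁₁ > 0 and a₂₂ > 0, then the quartic P(λ) has no purely imaginary root iℓ with ℓ ≠ 0 for any c ≠ 0. -/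
theorem stmt16 (a11 a12 a21 a22 c d : ℝ) (hd : 0 < d) (hc : c ≠ 0)
    (h11 : 0 < a11) (h22 : 0 < a22) :
    ∀ ℓ : ℝ, ℓ ≠ 0 →
      (Complex.I * ℓ) ^ 4 + ((1 + 1 / d) * c : ℝ) * (Complex.I * ℓ) ^ 3 +
        ((c ^ 2 / d - a11 - a22 / d : ℝ)) * (Complex.I * ℓ) ^ 2 -
        (((a11 + a22) / d * c : ℝ)) * (Complex.I * ℓ) +
        ((a11 * a22 - a12 * a21) / d : ℝ) ≠ 0 := by
  intro ℓ hℓ h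
  have him := congrArg Complex.im h
  simp [Complex.ext_iff, pow_succ, Complex.mul_im, Complex.mul_re] at him
  -- him should be a real equation
  have hdd : (0:ℝ) < 1 + 1 / d := by positivity
  have hbr : 0 < (1 + 1 / d) * ℓ ^ 2 + (a11 + a22) / d := by positivity
  have hℓ2 : ℓ ^ 2 ≠ 0 := pow_ne_zero _ hℓ
  have key : c * ℓ * ((1 + 1 / d) * ℓ ^ 2 + (a11 + a22) / d) = 0 := by
    linear_combination -him
  exact mul_ne_zero (mul_ne_zero hc hℓ) hbr.ne' key
end

section
/- Let α, β, γ, δ, ζ, η > 0 with η > αζ. Define c_min = −2√(1 − αζ/η)·(1 − (βζ + γη)/(δη + 2(η − αζ))) and c̄_min = −2√(1 − αζ/η)·(1 − γ/δ). Then |c_min| > |c̄_min| if and only if β < 2γ(η − αζ)/(δζ), provided both bracketed factors are positive. -/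
theorem stmt18 (α β γ δ ζ η : ℝ)
    (hα : 0 < α) (hβ : 0 < β) (hγ : 0 < γ) (hδ : 0 < δ) (hζ : 0 < ζ) (hη : 0 < η)
    (hcoex : α * ζ < η)
    (hbr1 : (β * ζ + γ * η) / (δ * η + 2 * (η - α * ζ)) < 1)
    (hbr2 : γ / δ < 1) :
    |(-2 * Real.sqrt (1 - α * ζ / η) *
        (1 - (β * ζ + γ * η) / (δ * η + 2 * (η - α * ζ))))| >
    |(-2 * Real.sqrt (1 - α * ζ / η) * (1 - γ / δ))| ↔
    β < 2 * γ * (η - α * ζ) / (δ * ζ) := by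
  have hs : 0 < Real.sqrt (1 - α * ζ / η) := by
    apply Real.sqrt_pos.mpr
    have : α * ζ / η < 1 := (div_lt_one hη).mpr hcoex
    linarith
  have hD : 0 < δ * η + 2 * (η - α * ζ) := by nlinarith [mul_pos hδ hη]
  have hb1 : 0 < 1 - (β * ζ + γ * η) / (δ * η + 2 * (η - α * ζ)) := by linarith
  have hb2 : 0 < 1 - γ / δ := by linarith
  rw [abs_of_neg (by nlinarith), abs_of_neg (by nlinarith)]
  constructor
  · intro h
    have hlt : (β * ζ + γ * η) / (δ * η + 2 * (η - α * ζ)) < γ / δ := by nlinarith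
    rw [div_lt_div_iff₀ hD hδ] at hlt
    rw [lt_div_iff₀ (by positivity)]
    nlinarith
  · intro h
    rw [lt_div_iff₀ (by positivity)] at h
    have hlt : (β * ζ + γ * η) / (δ * η + 2 * (η - α * ζ)) < γ / δ := by
      rw [div_lt_div_iff₀ hD hδ]; nlinarith
    nlinarith
end
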